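/- The chain component of the identity, CC(f) = {x ∈ G : x ⇝ e and e ⇝ x}, of a continuous endomorphism f of a compact abelian topological group G is a subgroup of G. -/

import Mathlib

/-- `EChainFrom f E x y` : there is an `E`-chain of length `n ≥ 1` from `x` to `y`. -/
def EChainFrom {G : Type*} [Group G] (f : G → G) (E : Set G) (x y : G) : Prop :=
  ∃ n : ℕ, 1 ≤ n ∧ ∃ c : ℕ → G, c 0 = x ∧ c n = y ∧
    ∀ i < n, f (c i) * (c (i + 1))⁻¹ ∈ E

/-- `x ⇝ y` : for every neighborhood `E` of the identity there is an `E`-chain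
from `x` to `y`. -/
def ChainTo {G : Type*} [Group G] [TopologicalSpace G] (f : G → G) (x y : G) : Prop :=
  ∀ E ∈ nhds (1 : G), EChainFrom f E x y

/-- The chain recurrent set of `f`. -/
def chainRecurrentSet {G : Type*} [Group G] [TopologicalSpace G] (f : G → G) : Set G :=
  {x : G | ChainTo f x x}

/-- The chain component of the identity. -/
def chainComponentOne {G : Type*} [Group G] [TopologicalSpace G] (f : G → G) : Set G :=
  {x : G | ChainTo f x 1 ∧ ChainTo f 1 x}

/-!
Chains for `f` can be multiplied and inverted pointwise: since `f` is a homomorphism of an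
abelian group, the jumps of the product (inverse) chain are the products (inverses) of the
jumps. Chains of different lengths are first brought to a common length by idling at the
fixed point `1`, and a neighbourhood `E` of `1` is met by taking `V` with `V * V ⊆ E`.
-/

open Pointwise

def EChainOfLength {G : Type*} [Group G] (f : G → G) (E : Set G) (n : ℕ) (x y : G) : Prop :=
  ∃ c : ℕ → G, c 0 = x ∧ c n = y ∧ ∀ i < n, f (c i) * (c (i + 1))⁻¹ ∈ E

namespace EChainOfLength

section Group

variable {G : Type*} [Group G] {f : G → G} {E : Set G} {n k : ℕ} {x y z : G}

lemma of_map_eq (hy : f y = y) (hE : (1 : G) ∈ E) (n : ℕ) : EChainOfLength f E n y y :=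
  ⟨fun _ => y, rfl, rfl, fun _ _ => by simpa [hy] using hE⟩

lemma mono {F : Set G} (h : EChainOfLength f E n x y) (hEF : E ⊆ F) :
    EChainOfLength f F n x y :=
  let ⟨c, hc0, hcn, hc⟩ := h
  ⟨c, hc0, hcn, fun i hi => hEF (hc i hi)⟩

lemma trans (h₁ : EChainOfLength f E n x y) (h₂ : EChainOfLength f E k y z) :
    EChainOfLength f E (n + k) x z := by
  obtain ⟨c, hc0, hcn, hc⟩ := h₁
  obtain ⟨d, hd0, hdk, hd⟩ := h₂
  set e : ℕ → G := fun i => if i ≤ n then c i else d (i - n) with he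
  have he_tail : ∀ i, n ≤ i → e i = d (i - n) := by
    intro i hi
    rcases hi.eq_or_lt with rfl | hlt
    · simp [he, hcn, hd0]
    · simp [he, Nat.not_le.mpr hlt]
  refine ⟨e, by simp [he, hc0], by rw [he_tail _ (by omega), Nat.add_sub_cancel_left, hdk],
    fun i hi => ?_⟩
  rcases Nat.lt_or_ge i n with hin | hni
  · simpa [he, hin.le, Nat.succ_le_of_lt hin] using hc i hin
  · rw [he_tail i hni, he_tail (i + 1) (by omega), Nat.sub_add_comm hni]
    exact hd _ (by omega)

lemma extend_of_map_target_eq (h : EChainOfLength f E n x y) (hy : f y = y) (hE : (1 : G) ∈ E)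
    {m : ℕ} (hnm : n ≤ m) : EChainOfLength f E m x y := by
  obtain ⟨k, rfl⟩ := Nat.exists_eq_add_of_le hnm
  exact h.trans (of_map_eq hy hE k)

lemma extend_of_map_source_eq (h : EChainOfLength f E n x y) (hx : f x = x) (hE : (1 : G) ∈ E)
    {m : ℕ} (hnm : n ≤ m) : EChainOfLength f E m x y := by
  obtain ⟨k, rfl⟩ := Nat.exists_eq_add_of_le' hnm
  exact (of_map_eq hx hE k).trans h

end Group

section CommGroup

variable {G F : Type*} [CommGroup G] [FunLike F G G] [MonoidHomClass F G G] {f : F}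
  {E E' : Set G} {n : ℕ} {x y x' y' : G}

lemma mul (h : EChainOfLength f E n x y) (h' : EChainOfLength f E' n x' y') :
    EChainOfLength f (E * E') n (x * x') (y * y') := by
  obtain ⟨c, hc0, hcn, hc⟩ := h
  obtain ⟨d, hd0, hdn, hd⟩ := h'
  refine ⟨c * d, by simp [hc0, hd0], by simp [hcn, hdn], fun i hi => ?_⟩
  have hjump : f ((c * d) i) * ((c * d) (i + 1))⁻¹ =
      (f (c i) * (c (i + 1))⁻¹) * (f (d i) * (d (i + 1))⁻¹) := by
    simp only [Pi.mul_apply, map_mul, mul_inv, mul_mul_mul_comm]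
  exact hjump ▸ Set.mul_mem_mul (hc i hi) (hd i hi)

lemma inv (h : EChainOfLength f E n x y) : EChainOfLength f E⁻¹ n x⁻¹ y⁻¹ := by
  obtain ⟨c, hc0, hcn, hc⟩ := h
  refine ⟨c⁻¹, by simp [hc0], by simp [hcn], fun i hi => ?_⟩
  have hjump : f (c⁻¹ i) * (c⁻¹ (i + 1))⁻¹ = (f (c i) * (c (i + 1))⁻¹)⁻¹ := by
    simp only [Pi.inv_apply, map_inv, mul_inv]
  rw [hjump, Set.inv_mem_inv]
  exact hc i hi

end CommGroup

end EChainOfLength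

namespace ChainTo

lemma of_map_eq {G : Type*} [Group G] [TopologicalSpace G] {f : G → G} {x : G}
    (hx : f x = x) : ChainTo f x x := fun _ hE =>
  ⟨1, le_rfl, EChainOfLength.of_map_eq hx (mem_of_mem_nhds hE) 1⟩

variable {G F : Type*} [CommGroup G] [TopologicalSpace G] [FunLike F G G]
  [MonoidHomClass F G G] {f : F} {x y x' y' : G}

lemma inv [IsTopologicalGroup G] (h : ChainTo f x y) : ChainTo f x⁻¹ y⁻¹ := fun E hE => by
  obtain ⟨n, hn, hc : EChainOfLength f E⁻¹ n x y⟩ := h E⁻¹ (inv_mem_nhds_one G hE)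
  exact ⟨n, hn, inv_inv E ▸ hc.inv⟩

lemma mul_of_map_target_eq [ContinuousMul G] (h : ChainTo f x y) (h' : ChainTo f x' y')
    (hy : f y = y) (hy' : f y' = y') : ChainTo f (x * x') (y * y') := fun E hE => by
  obtain ⟨V, hVo, hV1, hVE⟩ := exists_open_nhds_one_mul_subset hE
  obtain ⟨n, hn, hc : EChainOfLength f V n x y⟩ := h V (hVo.mem_nhds hV1)
  obtain ⟨k, -, hd : EChainOfLength f V k x' y'⟩ := h' V (hVo.mem_nhds hV1)
  refine ⟨max n k, hn.trans (le_max_left n k), ?_⟩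
  exact ((hc.extend_of_map_target_eq hy hV1 (le_max_left n k)).mul
    (hd.extend_of_map_target_eq hy' hV1 (le_max_right n k))).mono hVE

lemma mul_of_map_source_eq [ContinuousMul G] (h : ChainTo f x y) (h' : ChainTo f x' y')
    (hx : f x = x) (hx' : f x' = x') : ChainTo f (x * x') (y * y') := fun E hE => by
  obtain ⟨V, hVo, hV1, hVE⟩ := exists_open_nhds_one_mul_subset hE
  obtain ⟨n, hn, hc : EChainOfLength f V n x y⟩ := h V (hVo.mem_nhds hV1)
  obtain ⟨k, -, hd : EChainOfLength f V k x' y'⟩ := h' V (hVo.mem_nhds hV1)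
  refine ⟨max n k, hn.trans (le_max_left n k), ?_⟩
  exact ((hc.extend_of_map_source_eq hx hV1 (le_max_left n k)).mul
    (hd.extend_of_map_source_eq hx' hV1 (le_max_right n k))).mono hVE

end ChainTo

theorem chainComponentOne_is_subgroup_general {G : Type*} [CommGroup G] [TopologicalSpace G]
    [IsTopologicalGroup G] (f : G →* G) :
    ∃ H : Subgroup G, (H : Set G) = chainComponentOne ⇑f := by
  have hf1 : f 1 = 1 := map_one f
  refine ⟨{ carrier := chainComponentOne ⇑f
            one_mem' := ⟨ChainTo.of_map_eq hf1, ChainTo.of_map_eq hf1⟩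
            mul_mem' := ?_
            inv_mem' := ?_ }, rfl⟩
  · rintro x y ⟨hx1, h1x⟩ ⟨hy1, h1y⟩
    exact ⟨by simpa using hx1.mul_of_map_target_eq hy1 hf1 hf1,
      by simpa using h1x.mul_of_map_source_eq h1y hf1 hf1⟩
  · rintro x ⟨hx1, h1x⟩
    exact ⟨by simpa using hx1.inv, by simpa using h1x.inv⟩

/-- The chain component of the identity of a continuous endomorphism of a compact
abelian topological group is a subgroup. -/
theorem chainComponentOne_is_subgroup {G : Type*} [CommGroup G] [TopologicalSpace G]
    [IsTopologicalGroup G] [CompactSpace G] (f : G →* G) (hf : Continuous f) :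
    ∃ H : Subgroup G, (H : Set G) = chainComponentOne ⇑f :=
  chainComponentOne_is_subgroup_general f
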